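/- Let G be a metrizable abelian topological group. Then the Pontryagin dual Ĝ of G is hemicompact and a k-space. -/

import Mathlib

/-
Fix a decreasing basis `U n` of neighbourhoods of `1` in `G` and let `polar (U n)` be the set of
characters mapping `U n` into the closed right half circle. A character mapping `V * V` into a
short arc around `1` maps `V` into the arc of half the length, so iterating with shrinking
neighbourhoods shows that the polar of a neighbourhood is equicontinuous, hence compact by
Arzelà–Ascoli. Along a null sequence of `G`, the characters of a compact set converge to `1`
uniformly, so a compact set lies in one of the polars: `Ĝ` is hemicompact.

For the k-space property it suffices, after a translation, to show that a set `C` meeting every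
compact set in a compact set contains `1` once `1 ∈ closure C`. If not, compactness of
`C ∩ polar (U n)` yields finite sets `A 0 ⊆ A 1 ⊆ ⋯`, with `A (n + 1) \ A n ⊆ U n`, such that no
character of `C ∩ polar (U n)` maps `A n` into the half circle. Then `{1} ∪ ⋃ n, A n` is compact,
and the characters mapping it into the open half circle form a neighbourhood of `1` missing `C`.
-/

open Filter Topology Set

/-- A hemicompact space. -/
def Hemicompact (X : Type*) [TopologicalSpace X] : Prop :=
  ∃ K : ℕ → Set X, (∀ n, IsCompact (K n)) ∧ ∀ C : Set X, IsCompact C → ∃ n, C ⊆ K n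

/-- A k-space: a set is closed as soon as its intersection with every compact set `K`
is closed in `K`. -/
def KSpace (X : Type*) [TopologicalSpace X] : Prop :=
  ∀ C : Set X, (∀ K : Set X, IsCompact K → IsClosed ((↑·) ⁻¹' C : Set K)) → IsClosed C

open Real

theorem isCompact_insert_of_forall_finite_diff {X : Type*} [TopologicalSpace X] {a : X}
    {T : Set X} (h : ∀ N ∈ 𝓝 a, (T \ N).Finite) : IsCompact (insert a T) := by
  have hT : Tendsto ((↑) : T → X) cofinite (𝓝 a) := fun N hN ↦
    ((h N hN).preimage Subtype.val_injective.injOn).subset fun x hx ↦ ⟨x.2, hx⟩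
  simpa using hT.isCompact_insert_range_of_cofinite

theorem IsCompact.eventually_forall_apply_mem {X Y : Type*} [TopologicalSpace X]
    [TopologicalSpace Y] {C : Set C(X, Y)} (hC : IsCompact C) {u : ℕ → X} {x : X}
    (hu : Tendsto u atTop (𝓝 x)) {O : Set Y} (hO : IsOpen O) (hCO : ∀ f ∈ C, f x ∈ O) :
    ∀ᶠ n in atTop, ∀ f ∈ C, f (u n) ∈ O := by
  let T : ℕ → Set X := fun m ↦ insert x (range fun n ↦ u (n + m))
  have hT : ∀ m, IsCompact (T m) := fun m ↦
    (hu.comp (tendsto_add_atTop_nat m)).isCompact_insert_range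
  have hT_anti : Antitone T := by
    rintro m m' hm _ (rfl | ⟨n, rfl⟩)
    · exact mem_insert _ _
    · exact mem_insert_of_mem _ ⟨n + (m' - m), by dsimp only; congr 1; omega⟩
  have hcover : C ⊆ ⋃ m, {f : C(X, Y) | MapsTo f (T m) O} := by
    intro f hf
    obtain ⟨m, hm⟩ := eventually_atTop.mp
      (((f.continuous.tendsto x).comp hu).eventually (hO.mem_nhds (hCO f hf)))
    refine mem_iUnion.mpr ⟨m, ?_⟩
    rintro _ (rfl | ⟨n, rfl⟩)
    exacts [hCO f hf, hm _ (Nat.le_add_left m n)]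
  obtain ⟨m, hm⟩ := hC.elim_directed_cover _
    (fun m ↦ ContinuousMap.isOpen_setOfPred_mapsTo (hT m) hO) hcover
    (Monotone.directed_le fun m m' hm f hf ↦ hf.mono_left (hT_anti hm))
  filter_upwards [eventually_ge_atTop m] with n hn f hf
  exact hm hf (mem_insert_of_mem _ ⟨n - m, by simp only [Nat.sub_add_cancel hn]⟩)

theorem iUnion_subset_union_of_subset_union_succ {X : Type*} {A U : ℕ → Set X}
    (hU : Antitone U) (hA : Monotone A) (hAU : ∀ n, A (n + 1) ⊆ A n ∪ U n) (m : ℕ) :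
    ⋃ n, A n ⊆ A m ∪ U m := by
  refine iUnion_subset fun n ↦ ?_
  rcases le_total n m with hnm | hmn
  · exact (hA hnm).trans subset_union_left
  · induction n, hmn using Nat.le_induction with
    | base => exact subset_union_left
    | succ n hmn ih => exact (hAU n).trans (union_subset ih ((hU hmn).trans subset_union_right))

theorem exists_seq_of_forall_exists_succ {α : Type*} {P : ℕ → α → Prop} {R : ℕ → α → α → Prop}
    (h0 : ∃ a, P 0 a) (h : ∀ n a, P n a → ∃ b, R n a b ∧ P (n + 1) b) :
    ∃ f : ℕ → α, ∀ n, P n (f n) ∧ R n (f n) (f (n + 1)) := by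
  choose a₀ ha₀ using h0
  choose g hgR hgP using h
  let f : ∀ n, {a // P n a} := fun n ↦
    Nat.rec ⟨a₀, ha₀⟩ (fun n a ↦ ⟨g n a.1 a.2, hgP n a.1 a.2⟩) n
  exact ⟨fun n ↦ (f n).1, fun n ↦ ⟨(f n).2, hgR n _ (f n).2⟩⟩

namespace Circle

theorem mem_centeredArc_pi_div_two {z : Circle} : z ∈ centeredArc (π / 2) ↔ 0 < (z : ℂ).re := by
  rw [mem_centeredArc (by linarith [pi_pos]), Complex.abs_arg_lt_pi_div_two_iff]
  simp [coe_ne_zero]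

theorem re_pos_of_re_mul_self_nonneg {z : Circle} (h : 0 ≤ (z : ℂ).re)
    (h2 : 0 ≤ ((z * z : Circle) : ℂ).re) : 0 < (z : ℂ).re := by
  have hz := normSq_coe z
  simp only [coe_mul, Complex.mul_re, Complex.normSq_apply] at h2 hz
  nlinarith

theorem mem_centeredArc_of_mul_self_mem {z : Circle} {k : ℕ}
    (h : z ∈ centeredArc (π / 2 ^ (k + 1))) (h2 : z * z ∈ centeredArc (π / 2 ^ (k + 1))) :
    z ∈ centeredArc (π / 2 ^ (k + 2)) := by
  have hπ : π / 2 ^ (k + 1) ≤ π / (2 : ℕ) := by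
    push_cast
    exact div_le_div_of_nonneg_left pi_nonneg two_pos
      (le_self_pow₀ one_le_two k.succ_ne_zero)
  simpa [div_div, ← pow_succ] using mem_centeredArc_div (n := 2)
    (div_le_self pi_nonneg (one_le_pow₀ one_le_two)) (centeredArc_mono hπ h) (by rwa [sq])

theorem eq_one_of_forall_re_pow_nonneg {z : Circle} (h : ∀ n : ℕ, 0 ≤ ((z ^ n : Circle) : ℂ).re) :
    z = 1 :=
  eq_one_of_forall_pow_mem_centeredArc_pi_div_two fun n _ ↦ mem_centeredArc_pi_div_two.mpr <|
    re_pos_of_re_mul_self_nonneg (h n) (by rw [← pow_add, ← two_mul]; exact h (2 * n))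

end Circle

theorem IsCompact.inter_of_isClosed_preimage_coe {X : Type*} [TopologicalSpace X] {C K : Set X}
    (hK : IsCompact K) (hC : IsClosed ((↑) ⁻¹' C : Set K)) : IsCompact (C ∩ K) := by
  have : CompactSpace K := isCompact_iff_compactSpace.mp hK
  simpa [Subtype.image_preimage_coe, inter_comm] using hC.isCompact.image continuous_subtype_val

theorem kSpace_of_forall_one_mem {X : Type*} [TopologicalSpace X] [Group X] [IsTopologicalGroup X]
    (h : ∀ C : Set X, (∀ K, IsCompact K → IsCompact (C ∩ K)) → 1 ∈ closure C → 1 ∈ C) :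
    KSpace X := by
  intro C hC
  refine closure_subset_iff_isClosed.mp fun g hg ↦ ?_
  let φ := Homeomorph.mulLeft g
  have hφC : ∀ K, IsCompact K → IsCompact (φ ⁻¹' C ∩ K) := fun K hK ↦ by
    rw [← φ.preimage_image K, ← preimage_inter, φ.isCompact_preimage]
    exact (hK.image φ.continuous).inter_of_isClosed_preimage_coe (hC _ (hK.image φ.continuous))
  have h1 : 1 ∈ closure (φ ⁻¹' C) := by
    rw [← φ.preimage_closure]
    simpa [φ] using hg
  simpa [φ] using h _ hφC h1

theorem MonoidHom.exists_nhds_mapsTo_of_mul_self_mem {G M : Type*} [TopologicalSpace G]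
    [MulOneClass G] [ContinuousMul G] [MulOneClass M] {A B : Set M}
    (hAB : ∀ z ∈ A, z * z ∈ A → z ∈ B) {U : Set G} (hU : U ∈ 𝓝 1) :
    ∃ W ∈ 𝓝 (1 : G), ∀ f : G →* M, MapsTo f U A → MapsTo f W B := by
  obtain ⟨W, hW, hWU⟩ := exists_nhds_one_split hU
  refine ⟨W, hW, fun f hf x hx ↦ hAB _ ?_ ?_⟩
  · simpa using hf (hWU x hx 1 (mem_of_mem_nhds hW))
  · simpa using hf (hWU x hx x hx)

theorem MonoidHom.exists_nhds_mapsTo_centeredArc {G : Type*} [TopologicalSpace G]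
    [MulOneClass G] [ContinuousMul G] {U : Set G} (hU : U ∈ 𝓝 1) (k : ℕ) :
    ∃ W ∈ 𝓝 (1 : G), ∀ f : G →* Circle, MapsTo f U {z | 0 ≤ (z : ℂ).re} →
      MapsTo f W (Circle.centeredArc (π / 2 ^ (k + 1))) := by
  induction k with
  | zero =>
    simpa using exists_nhds_mapsTo_of_mul_self_mem (A := {z : Circle | 0 ≤ (z : ℂ).re})
      (fun z hz hz2 ↦ Circle.mem_centeredArc_pi_div_two.mpr
        (Circle.re_pos_of_re_mul_self_nonneg hz hz2)) hU
  | succ k ih =>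
    obtain ⟨W, hW, hWk⟩ := ih
    obtain ⟨W', hW', hW'W⟩ := exists_nhds_mapsTo_of_mul_self_mem
      (fun z ↦ Circle.mem_centeredArc_of_mul_self_mem) hW
    exact ⟨W', hW', fun f hf ↦ hW'W f (hWk f hf)⟩

theorem MonoidHom.equicontinuousAt_setOf_mapsTo_re_nonneg {G : Type*} [TopologicalSpace G]
    [MulOneClass G] [ContinuousMul G] {U : Set G} (hU : U ∈ 𝓝 1) :
    EquicontinuousAt
      (fun f : {f : G →* Circle | MapsTo f U {z | 0 ≤ (z : ℂ).re}} ↦ (f : G → Circle)) 1 := by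
  rw [Circle.hasBasis_centeredArc_div_two_pow.uniformity_of_nhds_one.equicontinuousAt_iff_right]
  intro k _
  obtain ⟨W, hW, hWk⟩ := exists_nhds_mapsTo_centeredArc hU k
  filter_upwards [hW] with x hx f
  simpa using hWk f f.2 hx

theorem ContinuousMonoidHom.isCompact_setOf_mapsTo {X Y : Type*} [TopologicalSpace X] [Group X]
    [IsTopologicalGroup X] [UniformSpace Y] [Group Y] [IsUniformGroup Y] [T2Space Y]
    [CompactSpace Y] {U : Set X} {A : Set Y} (hA : IsClosed A)
    (h : EquicontinuousAt (fun f : {f : X →* Y | MapsTo f U A} ↦ (f : X → Y)) 1) :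
    IsCompact {f : X →ₜ* Y | MapsTo f U A} := by
  replace h := equicontinuous_of_equicontinuousAt_one _ h
  let S₀ : Set (X →* Y) := {f | MapsTo f U A}
  let S : Set C(X, Y) := toContinuousMap '' {f : X →ₜ* Y | MapsTo f U A}
  have hS : ((⇑) : C(X, Y) → X → Y) '' S = (⇑) '' S₀ := by
    ext g
    constructor
    · rintro ⟨-, ⟨f, hf, rfl⟩, rfl⟩
      exact ⟨f.toMonoidHom, hf, rfl⟩
    · rintro ⟨f, hf, rfl⟩
      exact ⟨_, ⟨⟨f, h.continuous ⟨f, hf⟩⟩, hf, rfl⟩, rfl⟩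
  have hS₀ : (⇑) '' S₀ = U.pi (fun _ ↦ A) ∩ range ((⇑) : (X →* Y) → X → Y) := by
    ext g
    constructor
    · rintro ⟨f, hf, rfl⟩
      exact ⟨hf, f, rfl⟩
    · rintro ⟨hg, f, rfl⟩
      exact ⟨f, hg, rfl⟩
  have hS_compact : IsCompact (((⇑) : C(X, Y) → X → Y) '' S) := by
    rw [hS, hS₀]
    exact ((isClosed_set_pi fun _ _ ↦ hA).inter (MonoidHom.isClosed_range_coe X Y)).isCompact
  have hS_equi : Equicontinuous ((↑) : S → X → Y) := by
    rw [equicontinuous_iff_range] at h ⊢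
    rwa [← image_eq_range, hS, ← Subtype.range_coe (s := S₀), ← range_comp]
  rw [(isInducing_toContinuousMap X Y).isCompact_iff]
  exact ArzelaAscoli.isCompact_of_equicontinuous S hS_compact hS_equi

namespace PontryaginDual

section Monoid

variable {G : Type*} [Monoid G] [TopologicalSpace G]

instance : ContinuousEvalConst (PontryaginDual G) G Circle :=
  inferInstanceAs (ContinuousEvalConst (G →ₜ* Circle) G Circle)

def polar (S : Set G) : Set (PontryaginDual G) :=
  {χ | MapsTo χ S {z | 0 ≤ (z : ℂ).re}}

theorem isClosed_polar (S : Set G) : IsClosed (polar S) := by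
  simp only [polar, MapsTo, ofPred_forall]
  exact isClosed_biInter fun x _ ↦ isClosed_le continuous_const
    (Complex.continuous_re.comp (continuous_subtype_val.comp (continuous_eval_const x)))

theorem polar_union (S T : Set G) : polar (S ∪ T) = polar S ∩ polar T :=
  Set.ext fun _ ↦ mapsTo_union

theorem polar_univ : polar (univ : Set G) = {1} := by
  refine Set.ext fun χ ↦ ⟨fun hχ ↦ ext fun x ↦ ?_, by rintro rfl x -; simp⟩
  exact Circle.eq_one_of_forall_re_pow_nonneg fun n ↦ by simpa using hχ (mem_univ (x ^ n))

theorem exists_mem_polar {U : ℕ → Set G} (hU : (𝓝 (1 : G)).HasBasis (fun _ ↦ True) U)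
    (χ : PontryaginDual G) : ∃ n, χ ∈ polar (U n) := by
  have hχ : χ ⁻¹' {z | 0 ≤ (z : ℂ).re} ∈ 𝓝 1 := by
    refine (map_continuous χ).continuousAt.preimage_mem_nhds ?_
    rw [_root_.map_one χ]
    exact mem_of_superset (Circle.hasBasis_centeredArc_div_two_pow.mem_of_mem (i := 0) trivial)
      fun z hz ↦ (Circle.mem_centeredArc_pi_div_two.mp (by simpa using hz)).le
  obtain ⟨n, -, hn⟩ := hU.mem_iff.mp hχ
  exact ⟨n, fun x hx ↦ hn hx⟩

theorem exists_finite_subset_inter_polar_eq_empty {L : Set (PontryaginDual G)} (hL : IsCompact L)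
    {S : Set G} (h : L ∩ polar S = ∅) : ∃ F ⊆ S, F.Finite ∧ L ∩ polar F = ∅ := by
  have hS : ⋂ x : S, polar {(x : G)} ⊆ polar S := fun χ hχ x hx ↦
    mem_iInter.mp hχ ⟨x, hx⟩ rfl
  obtain ⟨u, hu⟩ := hL.elim_finite_subfamily_closed (fun x : S ↦ polar {(x : G)})
    (fun _ ↦ isClosed_polar _) (subset_empty_iff.mp (h ▸ inter_subset_inter_right _ hS))
  refine ⟨(↑) '' (u : Set S), by rintro _ ⟨x, -, rfl⟩; exact x.2, u.finite_toSet.image _,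
    subset_empty_iff.mp (hu ▸ inter_subset_inter_right _ fun χ hχ ↦ ?_)⟩
  exact mem_iInter₂.mpr fun x hx ↦ hχ.mono_left (singleton_subset_iff.mpr ⟨x, hx, rfl⟩)

theorem exists_subset_polar_of_isCompact {U : ℕ → Set G} (hU : (𝓝 (1 : G)).HasAntitoneBasis U)
    {C : Set (PontryaginDual G)} (hC : IsCompact C) : ∃ n, C ⊆ polar (U n) := by
  by_contra! h
  have hbad : ∀ n, ∃ χ ∈ C, ∃ x ∈ U n, (χ x : ℂ).re < 0 := fun n ↦ by
    obtain ⟨χ, hχC, hχ⟩ := not_subset.mp (h n)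
    simp only [polar, mem_ofPred_eq, MapsTo, not_forall, not_le, exists_prop] at hχ
    exact ⟨χ, hχC, hχ⟩
  choose χ hχC x hxU hχx using hbad
  have h1 : ∀ f ∈ ContinuousMonoidHom.toContinuousMap '' C, f 1 ∈ Circle.centeredArc (π / 2) := by
    rintro _ ⟨χ, -, rfl⟩
    simp [Circle.mem_centeredArc_pi_div_two]
  obtain ⟨n, hn⟩ := ((hC.image (ContinuousMonoidHom.isInducing_toContinuousMap G Circle).continuous)
    |>.eventually_forall_apply_mem (hU.tendsto hxU) (Circle.isOpen_centeredArc _) h1).exists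
  exact (hχx n).not_ge (Circle.mem_centeredArc_pi_div_two.mp (hn _ ⟨χ n, hχC n, rfl⟩)).le

end Monoid

variable {G : Type*} [Group G] [TopologicalSpace G] [IsTopologicalGroup G]

theorem isCompact_polar {U : Set G} (hU : U ∈ 𝓝 1) : IsCompact (polar U) :=
  ContinuousMonoidHom.isCompact_setOf_mapsTo (isClosed_le continuous_const
    (Complex.continuous_re.comp continuous_subtype_val))
    (MonoidHom.equicontinuousAt_setOf_mapsTo_re_nonneg hU)

theorem one_mem_of_one_mem_closure {U : ℕ → Set G} (hU : (𝓝 (1 : G)).HasAntitoneBasis U)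
    {C : Set (PontryaginDual G)} (hC : ∀ K, IsCompact K → IsCompact (C ∩ K))
    (h1 : 1 ∈ closure C) : 1 ∈ C := by
  by_contra h1C
  have base : ∃ A : Set G, A.Finite ∧ C ∩ polar (U 0) ∩ polar A = ∅ := by
    obtain ⟨F, -, hF, hCF⟩ := exists_finite_subset_inter_polar_eq_empty
      (hC _ (isCompact_polar (hU.mem 0))) (S := univ) (by simp [polar_univ, h1C])
    exact ⟨F, hF, hCF⟩
  have step : ∀ n (A : Set G), A.Finite ∧ C ∩ polar (U n) ∩ polar A = ∅ →
      ∃ B, (A ⊆ B ∧ B ⊆ A ∪ U n) ∧ B.Finite ∧ C ∩ polar (U (n + 1)) ∩ polar B = ∅ := by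
    rintro n A ⟨hA, hCA⟩
    obtain ⟨F, hFU, hF, hCF⟩ := exists_finite_subset_inter_polar_eq_empty
      ((hC _ (isCompact_polar (hU.mem (n + 1)))).inter_right (isClosed_polar A)) (S := U n)
      (subset_empty_iff.mp (hCA ▸ fun χ ⟨⟨⟨hχC, _⟩, hχA⟩, hχU⟩ ↦ ⟨⟨hχC, hχU⟩, hχA⟩))
    refine ⟨A ∪ F, ⟨subset_union_left, union_subset_union_right _ hFU⟩, hA.union hF, ?_⟩
    rwa [polar_union, ← inter_assoc]
  obtain ⟨A, hA⟩ := exists_seq_of_forall_exists_succ base step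
  let T := ⋃ n, A n
  have hT : IsCompact (insert 1 T) := isCompact_insert_of_forall_finite_diff fun N hN ↦ by
    obtain ⟨m, -, hm⟩ := hU.toHasBasis.mem_iff.mp hN
    refine (hA m).1.1.subset fun x ⟨hxT, hxN⟩ ↦ ?_
    refine (iUnion_subset_union_of_subset_union_succ hU.antitone
      (monotone_nat_of_le_succ fun n ↦ (hA n).2.1) (fun n ↦ (hA n).2.2) m hxT).resolve_right
      fun hx ↦ hxN (hm hx)
  let W : Set (PontryaginDual G) := {χ | MapsTo χ (insert 1 T) (Circle.centeredArc (π / 2))}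
  have hW : IsOpen W := (ContinuousMap.isOpen_setOfPred_mapsTo hT (Circle.isOpen_centeredArc _))
    |>.preimage (ContinuousMonoidHom.isInducing_toContinuousMap G Circle).continuous
  obtain ⟨χ, hχW, hχC⟩ := mem_closure_iff.mp h1 W hW
    (fun x _ ↦ by simp [Circle.mem_centeredArc_pi_div_two])
  obtain ⟨n, hn⟩ := exists_mem_polar hU.toHasBasis χ
  have hχA : χ ∈ polar (A n) := fun x hx ↦
    (Circle.mem_centeredArc_pi_div_two.mp (hχW (mem_insert_of_mem _ (mem_iUnion.mpr ⟨n, hx⟩)))).le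
  exact (hA n).1.2.subset ⟨⟨hχC, hn⟩, hχA⟩

end PontryaginDual

theorem stmt15 {G : Type*} [CommGroup G] [TopologicalSpace G] [IsTopologicalGroup G]
    [TopologicalSpace.MetrizableSpace G] :
    Hemicompact (PontryaginDual G) ∧ KSpace (PontryaginDual G) := by
  obtain ⟨U, hU⟩ := (𝓝 (1 : G)).exists_antitone_basis
  exact ⟨⟨fun n ↦ PontryaginDual.polar (U n), fun n ↦ PontryaginDual.isCompact_polar (hU.mem n),
    fun C hC ↦ PontryaginDual.exists_subset_polar_of_isCompact hU hC⟩,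
    kSpace_of_forall_one_mem fun C hC ↦ PontryaginDual.one_mem_of_one_mem_closure hU hC⟩
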